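/- Let (φ, γ) be a homomorphism of formal group laws (A, F) → (B, G) where B is a torsion-free commutative ring (for instance an integral domain of characteristic 0). If the linear coefficient b_0 of γ is zero, then γ = 0. -/

import Mathlib

/-- Substitution of a power series `g` (intended with zero constant term) into a
one-variable power series `γ`: the coefficient at `d` of `γ(g)` is the (exact, when
`g` has zero constant term) truncated sum `∑_{n ≤ |d|} γ_n · coeff d (g^n)`. -/
noncomputable def psSubst {B : Type*} [CommRing B] {σ : Type*} (g : MvPowerSeries σ B)
    (γ : PowerSeries B) : MvPowerSeries σ B :=
  fun d => ∑ n ∈ Finset.range ((d.sum fun _ m => m) + 1),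
    PowerSeries.coeff n γ * MvPowerSeries.coeff d (g ^ n)

/-- Substitution of a `k`-tuple of power series (intended with zero constant terms)
into a `k`-variable power series `F`, applying `φ` to the coefficients of `F`. -/
noncomputable def mvSubst {A B : Type*} [CommRing A] [CommRing B] {k : ℕ} {σ : Type*}
    (φ : A →+* B) (g : Fin k → MvPowerSeries σ B) (F : MvPowerSeries (Fin k) A) :
    MvPowerSeries σ B :=
  fun d => ∑ e ∈ Finset.Icc (0 : Fin k →₀ ℕ)
      (Finsupp.equivFunOnFinite.symm (Function.const (Fin k) (d.sum fun _ m => m))),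
    φ (MvPowerSeries.coeff e F) * MvPowerSeries.coeff d (∏ i, g i ^ e i)

/-- A (one-dimensional, commutative) formal group law `F ∈ A[[x,y]]`. -/
structure IsFGL {A : Type*} [CommRing A] (F : MvPowerSeries (Fin 2) A) : Prop where
  zero_right : mvSubst (RingHom.id A) ![MvPowerSeries.X 0, 0] F
      = (MvPowerSeries.X 0 : MvPowerSeries (Fin 2) A)
  zero_left : mvSubst (RingHom.id A) ![0, MvPowerSeries.X 1] F
      = (MvPowerSeries.X 1 : MvPowerSeries (Fin 2) A)
  comm : mvSubst (RingHom.id A) ![MvPowerSeries.X 1, MvPowerSeries.X 0] F = F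
  assoc : mvSubst (RingHom.id A)
        ![mvSubst (RingHom.id A) ![MvPowerSeries.X 0, MvPowerSeries.X 1] F,
          (MvPowerSeries.X 2 : MvPowerSeries (Fin 3) A)] F
      = mvSubst (RingHom.id A)
        ![(MvPowerSeries.X 0 : MvPowerSeries (Fin 3) A),
          mvSubst (RingHom.id A) ![MvPowerSeries.X 1, MvPowerSeries.X 2] F] F

/-- A homomorphism of formal group laws `(A,F) → (B,G)`: a ring map `φ` and a power
series `γ` with zero constant term with `φ(F)(γ(x),γ(y)) = γ(G(x,y))`. -/
structure IsFGLHom {A B : Type*} [CommRing A] [CommRing B] (F : MvPowerSeries (Fin 2) A)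
    (G : MvPowerSeries (Fin 2) B) (φ : A →+* B) (γ : PowerSeries B) : Prop where
  const : PowerSeries.constantCoeff γ = 0
  hom : mvSubst φ ![psSubst (MvPowerSeries.X 0) γ, psSubst (MvPowerSeries.X 1) γ] F
      = psSubst G γ

/-!
Suppose `γ_n = 0` for all `n < r`, where `r ≥ 2`, and compare the coefficients of `x y^(r-1)`
on the two sides of `φ(F)(γ(x), γ(y)) = γ(G(x,y))`. On the left each monomial
`γ(x)^a γ(y)^b` either involves no `x` (when `a = 0`) or is divisible by `x^2`, so the
coefficient vanishes. On the right only `γ_r G^r` contributes in degree `r`, and since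
`G ≡ x + y` modulo terms of degree `≥ 2`, the coefficient is `r γ_r`. Torsion-freeness of `B`
then forces `γ_r = 0`.
-/

open MvPowerSeries

section PowerSeries

variable {R : Type*} [CommSemiring R] {σ : Type*}

theorem X_pow_dvd_rename_const (i : σ) {n : ℕ} {P : PowerSeries R}
    (h : PowerSeries.X ^ n ∣ P) : X i ^ n ∣ rename (fun _ : Unit => i) P := by
  simpa [PowerSeries.X, rename_X] using map_dvd (rename (fun _ : Unit => i)) h

theorem coeff_rename_const_eq_zero {i j : σ} (hij : i ≠ j) (P : PowerSeries R) {d : σ →₀ ℕ}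
    (hd : d i ≠ 0) : coeff d (rename (fun _ : Unit => j) P) = 0 := by
  refine coeff_rename_eq_zero _ P fun ⟨y, hy⟩ => hd ?_
  rw [← hy, Finsupp.mapDomain_of_notMem_range]
  simpa using hij

theorem coeff_add_pow_of_order_le {L H : MvPowerSeries σ R} (hL : 1 ≤ L.order)
    (hH : 2 ≤ H.order) {d : σ →₀ ℕ} {r : ℕ} (hd : d.degree = r) :
    coeff d ((L + H) ^ r) = coeff d (L ^ r) := by
  rw [add_pow, map_sum, Finset.sum_range_succ, Nat.sub_self, pow_zero, mul_one,
    Nat.choose_self, Nat.cast_one, mul_one, Finset.sum_eq_zero, zero_add]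
  intro k hk
  rw [Finset.mem_range] at hk
  rw [← Nat.cast_comm, ← nsmul_eq_mul, map_nsmul]
  refine smul_eq_zero_of_right _ (coeff_of_lt_order ?_)
  calc (d.degree : ℕ∞) < k • 1 + (r - k) • 2 := by
        rw [hd, nsmul_eq_mul, nsmul_eq_mul]; norm_cast; omega
    _ ≤ k • L.order + (r - k) • H.order := by gcongr
    _ ≤ (L ^ k).order + (H ^ (r - k)).order := add_le_add (le_order_pow _) (le_order_pow _)
    _ ≤ (L ^ k * H ^ (r - k)).order := le_order_mul

theorem coeff_X_add_X_pow {i j : σ} (hij : i ≠ j) (m n : ℕ) :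
    coeff (Finsupp.single i m + Finsupp.single j n) ((X i + X j : MvPowerSeries σ R) ^ (m + n))
      = (m + n).choose m := by
  classical
  have hterm (k : ℕ) : coeff (Finsupp.single i m + Finsupp.single j n)
      ((X i : MvPowerSeries σ R) ^ k * X j ^ (m + n - k) * ((m + n).choose k : MvPowerSeries σ R))
      = if k = m then ((m + n).choose k : R) else 0 := by
    rw [← Nat.cast_comm, ← nsmul_eq_mul, map_nsmul, X_pow_eq, X_pow_eq, monomial_mul_monomial,
      one_mul, coeff_monomial]
    by_cases hk : k = m
    · subst hk
      simp
    · have hne : Finsupp.single i m + Finsupp.single j n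
          ≠ Finsupp.single i k + Finsupp.single j (m + n - k) := by
        intro h
        have := congrArg (· i) h
        simp [hij] at this
        omega
      rw [if_neg hne, smul_zero, if_neg hk]
  rw [add_pow, map_sum, Finset.sum_congr rfl fun k _ => hterm k, Finset.sum_ite_eq']
  simp

end PowerSeries

section Substitution

variable {A B : Type*} [CommRing A] [CommRing B]

theorem coeff_psSubst {σ : Type*} (g : MvPowerSeries σ B) (γ : PowerSeries B) (d : σ →₀ ℕ) :
    coeff d (psSubst g γ) =
      ∑ n ∈ Finset.range (d.degree + 1), PowerSeries.coeff n γ * coeff d (g ^ n) :=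
  rfl

theorem coeff_mvSubst {k : ℕ} {σ : Type*} (φ : A →+* B) (g : Fin k → MvPowerSeries σ B)
    (F : MvPowerSeries (Fin k) A) (d : σ →₀ ℕ) :
    coeff d (mvSubst φ g F) =
      ∑ e ∈ Finset.Icc 0 (Finsupp.equivFunOnFinite.symm (Function.const (Fin k) d.degree)),
        φ (coeff e F) * coeff d (∏ i, g i ^ e i) :=
  rfl

theorem psSubst_X_eq_rename {σ : Type*} (i : σ) (γ : PowerSeries B) :
    psSubst (X i) γ = rename (fun _ : Unit => i) γ := by
  classical
  ext d
  rw [coeff_psSubst]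
  by_cases hd : ∃ n, d = Finsupp.single i n
  · obtain ⟨n, rfl⟩ := hd
    have hrename := coeff_embDomain_rename (Function.Embedding.punit i) γ (Finsupp.single () n)
    rw [Finsupp.embDomain_single] at hrename
    rw [Finset.sum_eq_single n (fun m _ hm => by
      simp [coeff_X_pow, (Finsupp.single_injective i).eq_iff, Ne.symm hm]) (by simp)]
    simp only [coeff_X_pow, if_true, mul_one]
    exact hrename.symm
  · push Not at hd
    rw [coeff_rename_eq_zero]
    · exact Finset.sum_eq_zero fun n _ => by simp [coeff_X_pow, hd n]
    · rintro ⟨y, rfl⟩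
      refine hd (y ()) ?_
      conv_lhs => rw [Finsupp.unique_single y]
      rw [Finsupp.mapDomain_single]

theorem coeff_psSubst_of_coeff_eq_zero {σ : Type*} (g : MvPowerSeries σ B) {γ : PowerSeries B}
    {r : ℕ} (hγ : ∀ n < r, PowerSeries.coeff n γ = 0) {d : σ →₀ ℕ} (hd : d.degree = r) :
    coeff d (psSubst g γ) = PowerSeries.coeff r γ * coeff d (g ^ r) := by
  rw [coeff_psSubst, hd, Finset.sum_range_succ, Finset.sum_eq_zero, zero_add]
  intro n hn
  rw [hγ n (Finset.mem_range.mp hn), zero_mul]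

theorem coeff_single_prod_piSingle_X_pow {k : ℕ} (i : Fin k) (n : ℕ) (e : Fin k →₀ ℕ) :
    coeff (Finsupp.single i n)
        (∏ j, (Pi.single i (X i) : Fin k → MvPowerSeries (Fin k) B) j ^ e j)
      = if e = Finsupp.single i n then 1 else 0 := by
  by_cases he : ∀ j ≠ i, e j = 0
  · have he' : e = Finsupp.single i (e i) := by
      ext j
      by_cases hj : j = i
      · subst hj; simp
      · simp [he j hj, Ne.symm hj]
    rw [Finset.prod_eq_single i (fun j _ hj => by rw [he j hj, pow_zero]) (by simp),
      Pi.single_eq_same, coeff_X_pow]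
    conv_rhs => rw [he']
    simp [(Finsupp.single_injective i).eq_iff, eq_comm]
  · push Not at he
    obtain ⟨j, hji, hej⟩ := he
    rw [Finset.prod_eq_zero (Finset.mem_univ j) (by simp [hji, hej]), map_zero, if_neg]
    intro h
    simp [h, hji] at hej

theorem coeff_single_mvSubst_piSingle_X {k : ℕ} (φ : A →+* B) (F : MvPowerSeries (Fin k) A)
    (i : Fin k) (n : ℕ) :
    coeff (Finsupp.single i n) (mvSubst φ (Pi.single i (X i)) F)
      = φ (coeff (Finsupp.single i n) F) := by
  rw [coeff_mvSubst]
  simp_rw [coeff_single_prod_piSingle_X_pow, mul_ite, mul_one, mul_zero]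
  rw [Finset.sum_ite_eq', if_pos]
  rw [Finset.mem_Icc, Finsupp.single_le_iff]
  simp

theorem coeff_mvSubst_psSubst_X_eq_zero (φ : A →+* B) (F : MvPowerSeries (Fin 2) A)
    {γ : PowerSeries B} (hγ : PowerSeries.X ^ 2 ∣ γ) {d : Fin 2 →₀ ℕ} (hd : d 0 = 1) :
    coeff d (mvSubst φ ![psSubst (X 0) γ, psSubst (X 1) γ] F) = 0 := by
  rw [coeff_mvSubst]
  refine Finset.sum_eq_zero fun e _ => mul_eq_zero_of_right _ ?_
  simp only [Fin.prod_univ_two, Matrix.cons_val_zero, Matrix.cons_val_one,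
    psSubst_X_eq_rename, ← map_pow]
  rcases Nat.eq_zero_or_pos (e 0) with he | he
  · rw [he, pow_zero, map_one, one_mul]
    exact coeff_rename_const_eq_zero (i := 0) (by decide) _ (by omega)
  · have hdvd := dvd_mul_of_dvd_left (X_pow_dvd_rename_const 0 (dvd_pow hγ he.ne'))
      (rename (fun _ : Unit => (1 : Fin 2)) (γ ^ e 1))
    exact X_pow_dvd_iff.mp hdvd d (by omega)

end Substitution

section FormalGroupLaw

variable {A B : Type*} [CommRing A] [CommRing B]

theorem IsFGL.coeff_single {G : MvPowerSeries (Fin 2) B} (hG : IsFGL G) (i : Fin 2) (n : ℕ) :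
    coeff (Finsupp.single i n) G = if n = 1 then 1 else 0 := by
  have hsubst : mvSubst (RingHom.id B) (Pi.single i (X i)) G = X i := by
    obtain rfl | rfl : i = 0 ∨ i = 1 := by omega
    · convert hG.zero_right using 2
      ext j; fin_cases j <;> rfl
    · convert hG.zero_left using 2
      ext j; fin_cases j <;> rfl
  have hcoeff := congrArg (coeff (Finsupp.single i n)) hsubst
  rw [coeff_single_mvSubst_piSingle_X, coeff_X] at hcoeff
  simpa [(Finsupp.single_injective i).eq_iff] using hcoeff

theorem IsFGL.two_le_order_sub {G : MvPowerSeries (Fin 2) B} (hG : IsFGL G) :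
    2 ≤ (G - (X 0 + X 1)).order := by
  refine nat_le_order fun d hd => ?_
  have hd' : d 0 + d 1 < 2 := by simpa [Finsupp.degree_eq_sum] using hd
  obtain ⟨i, n, rfl⟩ : ∃ i n, d = Finsupp.single i n := by
    rcases Nat.eq_zero_or_pos (d 1) with h | h
    · exact ⟨0, d 0, by ext j; fin_cases j <;> simp [h]⟩
    · exact ⟨1, d 1, by ext j; fin_cases j <;> simp; omega⟩
  obtain rfl | rfl : i = 0 ∨ i = 1 := by omega
  all_goals simp [hG.coeff_single, coeff_X, Finsupp.single_eq_single_iff]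

theorem IsFGL.coeff_pow {G : MvPowerSeries (Fin 2) B} (hG : IsFGL G) (n : ℕ) :
    coeff (Finsupp.single 0 1 + Finsupp.single 1 n) (G ^ (1 + n)) = 1 + n := by
  have hL : 1 ≤ (X 0 + X 1 : MvPowerSeries (Fin 2) B).order :=
    one_le_order_iff_constCoeff_eq_zero.mpr (by simp)
  rw [← add_sub_cancel (X 0 + X 1) G, coeff_add_pow_of_order_le hL hG.two_le_order_sub
    (by simp), coeff_X_add_X_pow (by decide)]
  simp

theorem IsFGLHom.natCast_mul_coeff_eq_zero {F : MvPowerSeries (Fin 2) A}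
    {G : MvPowerSeries (Fin 2) B} {φ : A →+* B} {γ : PowerSeries B} (hG : IsFGL G)
    (hγ : IsFGLHom F G φ γ) {r : ℕ} (hr : 2 ≤ r) (h : ∀ n < r, PowerSeries.coeff n γ = 0) :
    (r : B) * PowerSeries.coeff r γ = 0 := by
  obtain ⟨n, rfl⟩ : ∃ n, r = 1 + n := ⟨r - 1, by omega⟩
  have hX : PowerSeries.X ^ 2 ∣ γ := PowerSeries.X_pow_dvd_iff.mpr fun m hm => h m (by omega)
  have hcoeff := congrArg (coeff (Finsupp.single 0 1 + Finsupp.single 1 n)) hγ.hom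
  rw [coeff_mvSubst_psSubst_X_eq_zero φ F hX (by simp),
    coeff_psSubst_of_coeff_eq_zero G h (by simp), hG.coeff_pow] at hcoeff
  rw [mul_comm]
  exact_mod_cast hcoeff.symm

end FormalGroupLaw

theorem stmt5_general {A B : Type*} [CommRing A] [CommRing B]
    (F : MvPowerSeries (Fin 2) A) (G : MvPowerSeries (Fin 2) B)
    (hG : IsFGL G) (φ : A →+* B) (γ : PowerSeries B)
    (hhom : IsFGLHom F G φ γ)
    (htf : ∀ (n : ℕ) (b : B), n ≠ 0 → n • b = 0 → b = 0)
    (h1 : PowerSeries.coeff 1 γ = 0) :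
    γ = 0 := by
  ext r
  rw [map_zero]
  induction r using Nat.strong_induction_on with
  | _ r ih =>
    match r with
    | 0 => simpa using hhom.const
    | 1 => exact h1
    | r + 2 =>
      refine htf (r + 2) _ (by omega) ?_
      rw [nsmul_eq_mul]
      exact hhom.natCast_mul_coeff_eq_zero hG (by omega) ih

/-- A homomorphism of formal group laws into a torsion-free ring whose linear
coefficient vanishes has `γ = 0`. -/
theorem stmt5 {A B : Type*} [CommRing A] [CommRing B]
    (F : MvPowerSeries (Fin 2) A) (G : MvPowerSeries (Fin 2) B)
    (hF : IsFGL F) (hG : IsFGL G) (φ : A →+* B) (γ : PowerSeries B)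
    (hhom : IsFGLHom F G φ γ)
    (htf : ∀ (n : ℕ) (b : B), n ≠ 0 → n • b = 0 → b = 0)
    (h1 : PowerSeries.coeff 1 γ = 0) :
    γ = 0 :=
  stmt5_general F G hG φ γ hhom htf h1
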